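/- arXiv:1605.06222 — 6 statements merged into one kernel-verified Lean document; each statement's English description precedes it below -/
import Mathlib

section
/- Let Γ be a finite group and P a Γ-poset. If x is a beat point of P, then P strongly Γ-collapses to the induced Γ-subposet P \ Γx obtained by removing the Γ-orbit of x. -/
/-- A Γ-equivariant order-preserving self-map of the Γ-poset `P`, regarded as a map of the
induced subposet `A`, which fixes every point of `Q` (an element of `Def_Γ(A, Q)`). -/
def IsDefPosetMap (Γ : Type*) [Group Γ] {P : Type*} [PartialOrder P] [MulAction Γ P]
    (A Q : Set P) (f : P → P) : Prop :=
  Set.MapsTo f A A ∧ (∀ x ∈ A, ∀ y ∈ A, x ≤ y → f x ≤ f y) ∧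
    (∀ γ : Γ, ∀ x ∈ A, f (γ • x) = γ • f x) ∧ ∀ y ∈ Q, f y = y

/-- One step of a zigzag in `Def_Γ(A, Q)`: both maps belong to `Def_Γ(A, Q)` and they are
comparable in the pointwise order (on `A`). -/
def posetDefStep (Γ : Type*) [Group Γ] {P : Type*} [PartialOrder P] [MulAction Γ P]
    (A Q : Set P) (f g : P → P) : Prop :=
  IsDefPosetMap Γ A Q f ∧ IsDefPosetMap Γ A Q g ∧
    ((∀ x ∈ A, f x ≤ g x) ∨ (∀ x ∈ A, g x ≤ f x))

/-- The induced Γ-subposet `A` of `P` strongly Γ-collapses to `Q ⊆ A`: there is a map `f` in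
`Def_Γ(A, Q)`, joined to the identity by a finite zigzag of pairwise comparable elements of
`Def_Γ(A, Q)`, whose image (on `A`) is contained in `Q`.  Taking `A = Set.univ` gives the
notion "`P` strongly Γ-collapses to `Q`". -/
def StronglyCollapsesOn (Γ : Type*) [Group Γ] {P : Type*} [PartialOrder P] [MulAction Γ P]
    (A Q : Set P) : Prop :=
  ∃ f : P → P, IsDefPosetMap Γ A Q f ∧
    Relation.ReflTransGen (posetDefStep Γ A Q) id f ∧ ∀ x ∈ A, f x ∈ Q

/-- `x` is an upper beat point of `P`: `{y | x < y}` has a minimum. -/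
def IsUpperBeatPoint {P : Type*} [PartialOrder P] (x : P) : Prop :=
  ∃ y, IsLeast {z : P | x < z} y

/-- `x` is a lower beat point of `P`: `{y | y < x}` has a maximum. -/
def IsLowerBeatPoint {P : Type*} [PartialOrder P] (x : P) : Prop :=
  ∃ y, IsGreatest {z : P | z < x} y

/-- `x` is a beat point of `P`. -/
def IsBeatPoint {P : Type*} [PartialOrder P] (x : P) : Prop :=
  IsUpperBeatPoint x ∨ IsLowerBeatPoint x


section Aux

variable {Γ P : Type*} [Group Γ] [PartialOrder P] [MulAction Γ P]

/-- The retraction sending each `γ • x` to `γ • y` and fixing everything else. -/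
noncomputable def beatMap (Γ : Type*) [Group Γ] {P : Type*} [PartialOrder P] [MulAction Γ P]
    (x y : P) : P → P :=
  fun z =>
    letI := Classical.propDecidable (∃ γ : Γ, γ • x = z)
    if h : ∃ γ : Γ, γ • x = z then h.choose • y else z

lemma beatMap_eq (x y : P) (hstab : ∀ σ : Γ, σ • x = x → σ • y = y)
    (γ : Γ) (z : P) (hz : γ • x = z) : beatMap Γ x y z = γ • y := by
  have h : ∃ γ : Γ, γ • x = z := ⟨γ, hz⟩
  have h1 : h.choose • x = z := h.choose_spec
  have h2 : (γ⁻¹ * h.choose) • x = x := by rw [mul_smul, h1, ← hz, inv_smul_smul]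
  have h3 := hstab _ h2
  rw [mul_smul] at h3
  have h4 : h.choose • y = γ • y := by
    have h5 := congrArg (fun w => γ • w) h3
    simpa [smul_smul] using h5
  have h6 : beatMap Γ x y z = h.choose • y := by
    unfold beatMap
    exact dif_pos h
  rw [h6, h4]

lemma beatMap_not (x y : P) (z : P) (hz : ¬ ∃ γ : Γ, γ • x = z) :
    beatMap Γ x y z = z := by
  unfold beatMap
  exact dif_neg hz

lemma not_lt_smul_self [Finite Γ] (hmono : ∀ γ : Γ, Monotone fun z : P => γ • z)
    (σ : Γ) (x : P) : ¬ x < σ • x := by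
  intro h
  have hs : StrictMono (fun z : P => σ • z) :=
    (hmono σ).strictMono_of_injective (MulAction.injective σ)
  have key : ∀ n : ℕ, x < σ ^ (n + 1) • x := by
    intro n
    induction n with
    | zero => simpa using h
    | succ n ih =>
      have h2 : σ • (σ ^ (n + 1) • x) = σ ^ (n + 2) • x := by
        rw [smul_smul, ← pow_succ']
      have h3 : σ • x < σ ^ (n + 2) • x := by
        have h4 : σ • x < σ • (σ ^ (n + 1) • x) := hs ih
        rwa [h2] at h4
      exact h.trans h3
  have hn : orderOf σ ≠ 0 := (orderOf_pos σ).ne'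
  obtain ⟨m, hm⟩ := Nat.exists_eq_succ_of_ne_zero hn
  rw [Nat.succ_eq_add_one] at hm
  have h7 := key m
  rw [← hm, pow_orderOf_eq_one, one_smul] at h7
  exact lt_irrefl x h7

lemma aux_collapse [Finite Γ] (x y : P)
    (hstab : ∀ σ : Γ, σ • x = x → σ • y = y)
    (hyo : ¬ ∃ γ : Γ, γ • x = y)
    (hmf : Monotone (beatMap Γ x y))
    (hcmp : (∀ z : P, z ≤ beatMap Γ x y z) ∨ (∀ z : P, beatMap Γ x y z ≤ z)) :
    StronglyCollapsesOn Γ Set.univ ((MulAction.orbit Γ x : Set P)ᶜ) := by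
  set f := beatMap Γ x y with hf
  have hmem : ∀ z : P, z ∈ MulAction.orbit Γ x ↔ ∃ γ : Γ, γ • x = z := by
    intro z; exact ⟨fun ⟨γ, hγ⟩ => ⟨γ, hγ⟩, fun ⟨γ, hγ⟩ => ⟨γ, hγ⟩⟩
  have hfix : ∀ q ∈ (MulAction.orbit Γ x : Set P)ᶜ, f q = q := by
    intro q hq
    exact beatMap_not x y q (fun h => hq ((hmem q).mpr h))
  have hequiv : ∀ γ : Γ, ∀ z : P, f (γ • z) = γ • f z := by
    intro γ z
    by_cases hz : ∃ δ : Γ, δ • x = z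
    · obtain ⟨δ, hδ⟩ := hz
      rw [hf, beatMap_eq x y hstab δ z hδ,
        beatMap_eq x y hstab (γ * δ) (γ • z) (by rw [mul_smul, hδ]), mul_smul]
    · have h2 : ¬ ∃ δ : Γ, δ • x = γ • z := by
        rintro ⟨δ, hδ⟩
        exact hz ⟨γ⁻¹ * δ, by rw [mul_smul, hδ, inv_smul_smul]⟩
      rw [hf, beatMap_not x y z hz, beatMap_not x y _ h2]
  have hdef : IsDefPosetMap Γ Set.univ ((MulAction.orbit Γ x : Set P)ᶜ) f :=
    ⟨Set.mapsTo_univ _ _, fun a _ b _ h => hmf h, fun γ z _ => hequiv γ z, hfix⟩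
  have hiddef : IsDefPosetMap Γ Set.univ ((MulAction.orbit Γ x : Set P)ᶜ) id :=
    ⟨Set.mapsTo_univ _ _, fun a _ b _ h => h, fun _ _ _ => rfl, fun _ _ => rfl⟩
  refine ⟨f, hdef, Relation.ReflTransGen.single ⟨hiddef, hdef, ?_⟩, ?_⟩
  · exact hcmp.imp (fun h z _ => h z) (fun h z _ => h z)
  · intro z _
    by_cases hz : ∃ δ : Γ, δ • x = z
    · obtain ⟨δ, hδ⟩ := hz
      rw [hf, beatMap_eq x y hstab δ z hδ]
      intro hmem'
      obtain ⟨ε, hε⟩ := (hmem _).mp hmem'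
      exact hyo ⟨δ⁻¹ * ε, by rw [mul_smul, hε, inv_smul_smul]⟩
    · rw [hf, beatMap_not x y z hz]
      exact fun h => hz ((hmem z).mp h)

end Aux

/-- Let Γ be a finite group and P a Γ-poset.  If x is a beat point of P, then P
strongly Γ-collapses to the induced Γ-subposet P \ Γx obtained by removing the Γ-orbit of x. -/
theorem stronglyCollapses_of_isBeatPoint {Γ P : Type*} [Group Γ] [Finite Γ] [PartialOrder P]
    [MulAction Γ P] (hmono : ∀ γ : Γ, Monotone fun x : P => γ • x)
    (x : P) (hx : IsBeatPoint x) :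
    StronglyCollapsesOn Γ Set.univ ((MulAction.orbit Γ x : Set P)ᶜ) := by
  have hsm : ∀ γ : Γ, StrictMono (fun z : P => γ • z) := fun γ =>
    (hmono γ).strictMono_of_injective (MulAction.injective γ)
  rcases hx with ⟨y, hy⟩ | ⟨y, hy⟩
  · -- upper beat point
    have hxy : x < y := hy.1
    have hstab : ∀ σ : Γ, σ • x = x → σ • y = y := by
      intro σ hσ
      have hinv : σ⁻¹ • x = x := inv_smul_eq_iff.mpr hσ.symm
      have h1 : IsLeast {z : P | x < z} (σ • y) := by
        constructor
        · show x < σ • y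
          have h : σ • x < σ • y := hsm σ hxy
          rwa [hσ] at h
        · intro z hz
          have h2 : x < σ⁻¹ • z := by
            have h : σ⁻¹ • x < σ⁻¹ • z := hsm σ⁻¹ hz
            rwa [hinv] at h
          have h3 : y ≤ σ⁻¹ • z := hy.2 h2
          have h4 : σ • y ≤ σ • σ⁻¹ • z := hmono σ h3
          rwa [smul_inv_smul] at h4
      exact (hy.unique h1).symm
    have hyo : ¬ ∃ γ : Γ, γ • x = y := by
      rintro ⟨σ, hσ⟩
      exact not_lt_smul_self hmono σ x (hσ ▸ hxy)
    have hle : ∀ z : P, z ≤ beatMap Γ x y z := by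
      intro z
      by_cases hz : ∃ δ : Γ, δ • x = z
      · obtain ⟨δ, hδ⟩ := hz
        rw [beatMap_eq x y hstab δ z hδ, ← hδ]
        exact hmono δ hxy.le
      · rw [beatMap_not x y z hz]
    have hmf : Monotone (beatMap Γ x y) := by
      intro a b hab
      by_cases ha : ∃ γ : Γ, γ • x = a
      · obtain ⟨γ, hγ⟩ := ha
        rcases eq_or_lt_of_le hab with rfl | hlt
        · exact le_rfl
        · rw [beatMap_eq x y hstab γ a hγ]
          have h1 : x < γ⁻¹ • b := by
            have h : γ⁻¹ • a < γ⁻¹ • b := hsm γ⁻¹ hlt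
            rwa [← hγ, inv_smul_smul] at h
          have h2 : y ≤ γ⁻¹ • b := hy.2 h1
          have h3 : γ • y ≤ γ • γ⁻¹ • b := hmono γ h2
          rw [smul_inv_smul] at h3
          exact h3.trans (hle b)
      · rw [beatMap_not x y a ha]
        exact hab.trans (hle b)
    exact aux_collapse x y hstab hyo hmf (Or.inl hle)
  · -- lower beat point
    have hxy : y < x := hy.1
    have hstab : ∀ σ : Γ, σ • x = x → σ • y = y := by
      intro σ hσ
      have hinv : σ⁻¹ • x = x := inv_smul_eq_iff.mpr hσ.symm
      have h1 : IsGreatest {z : P | z < x} (σ • y) := by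
        constructor
        · show σ • y < x
          have h : σ • y < σ • x := hsm σ hxy
          rwa [hσ] at h
        · intro z hz
          have h2 : σ⁻¹ • z < x := by
            have h : σ⁻¹ • z < σ⁻¹ • x := hsm σ⁻¹ hz
            rwa [hinv] at h
          have h3 : σ⁻¹ • z ≤ y := hy.2 h2
          have h4 : σ • σ⁻¹ • z ≤ σ • y := hmono σ h3
          rwa [smul_inv_smul] at h4
      exact (hy.unique h1).symm
    have hyo : ¬ ∃ γ : Γ, γ • x = y := by
      rintro ⟨σ, hσ⟩
      have h0 : σ • x < x := hσ ▸ hxy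
      have h1 : x < σ⁻¹ • x := by
        have h : σ⁻¹ • (σ • x) < σ⁻¹ • x := hsm σ⁻¹ h0
        rwa [inv_smul_smul] at h
      exact not_lt_smul_self hmono σ⁻¹ x h1
    have hge : ∀ z : P, beatMap Γ x y z ≤ z := by
      intro z
      by_cases hz : ∃ δ : Γ, δ • x = z
      · obtain ⟨δ, hδ⟩ := hz
        rw [beatMap_eq x y hstab δ z hδ, ← hδ]
        exact hmono δ hxy.le
      · rw [beatMap_not x y z hz]
    have hmf : Monotone (beatMap Γ x y) := by
      intro a b hab
      by_cases hb : ∃ γ : Γ, γ • x = b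
      · obtain ⟨γ, hγ⟩ := hb
        rcases eq_or_lt_of_le hab with rfl | hlt
        · exact le_rfl
        · rw [beatMap_eq x y hstab γ b hγ]
          have h1 : γ⁻¹ • a < x := by
            have h : γ⁻¹ • a < γ⁻¹ • b := hsm γ⁻¹ hlt
            rwa [← hγ, inv_smul_smul] at h
          have h2 : γ⁻¹ • a ≤ y := hy.2 h1
          have h3 : γ • γ⁻¹ • a ≤ γ • y := hmono γ h2
          rw [smul_inv_smul] at h3
          exact (hge a).trans h3
      · rw [beatMap_not x y b hb]
        exact (hge a).trans hab
    exact aux_collapse x y hstab hyo hmf (Or.inr hge)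
end

section
/- Let Γ be a finite group and Q ⊆ P' ⊆ P a chain of induced Γ-subposets of a Γ-poset P, and suppose that P strongly Γ-collapses to P'. Then P strongly Γ-collapses to Q if and only if P' strongly Γ-collapses to Q. -/
section

open Set

variable {Γ P : Type*} [Group Γ] [PartialOrder P] [MulAction Γ P]
  {A B C Q Q' : Set P} {f g r : P → P}

lemma isDefPosetMap_id : IsDefPosetMap Γ A Q id :=
  ⟨mapsTo_id A, fun _ _ _ _ h => h, fun _ _ _ => rfl, fun _ _ => rfl⟩

namespace IsDefPosetMap

lemma of_subset (hf : IsDefPosetMap Γ A Q' f) (hQ : Q ⊆ Q') : IsDefPosetMap Γ A Q f :=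
  ⟨hf.1, hf.2.1, hf.2.2.1, fun y hy => hf.2.2.2 y (hQ hy)⟩

lemma restrict (hf : IsDefPosetMap Γ A Q f) (hBA : B ⊆ A) (hfB : MapsTo f B B) :
    IsDefPosetMap Γ B Q f :=
  ⟨hfB, fun x hx y hy => hf.2.1 x (hBA hx) y (hBA hy), fun γ x hx => hf.2.2.1 γ x (hBA hx),
    hf.2.2.2⟩

lemma comp (hg : IsDefPosetMap Γ B Q g) (hf : IsDefPosetMap Γ A Q f) (hfB : MapsTo f A B)
    (hgA : MapsTo g B A) : IsDefPosetMap Γ A Q (g ∘ f) := by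
  obtain ⟨-, hg_mono, hg_equiv, hg_fix⟩ := hg
  obtain ⟨-, hf_mono, hf_equiv, hf_fix⟩ := hf
  refine ⟨hgA.comp hfB, fun x hx y hy hxy => ?_, fun γ x hx => ?_, fun y hy => ?_⟩
  · exact hg_mono _ (hfB hx) _ (hfB hy) (hf_mono x hx y hy hxy)
  · rw [Function.comp_apply, hf_equiv γ x hx, hg_equiv γ (f x) (hfB hx), Function.comp_apply]
  · rw [Function.comp_apply, hf_fix y hy, hg_fix y hy]

lemma retract_comp (hr : IsDefPosetMap Γ A Q r) (hrB : MapsTo r A B) (hBA : B ⊆ A)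
    (hf : IsDefPosetMap Γ A Q f) : IsDefPosetMap Γ B Q (r ∘ f) :=
  (hr.comp hf hf.1 hr.1).restrict hBA (hrB.comp (hf.1.mono_left hBA))

end IsDefPosetMap

lemma posetDefStep_id_of_eqOn (hr : IsDefPosetMap Γ A Q r) (hrA : EqOn r id A) :
    posetDefStep Γ A Q id r :=
  ⟨isDefPosetMap_id, hr, Or.inl fun _ hx => (hrA hx).ge⟩

namespace posetDefStep

lemma of_subset (h : posetDefStep Γ A Q' f g) (hQ : Q ⊆ Q') : posetDefStep Γ A Q f g :=
  ⟨h.1.of_subset hQ, h.2.1.of_subset hQ, h.2.2⟩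

lemma comp_left (h : posetDefStep Γ A Q f g) (hr : IsDefPosetMap Γ A Q r) (hrB : MapsTo r A B)
    (hBA : B ⊆ A) : posetDefStep Γ B Q (r ∘ f) (r ∘ g) := by
  obtain ⟨hf, hg, hfg | hgf⟩ := h
  all_goals refine ⟨hr.retract_comp hrB hBA hf, hr.retract_comp hrB hBA hg, ?_⟩
  · exact Or.inl fun x hx => hr.2.1 _ (hf.1 (hBA hx)) _ (hg.1 (hBA hx)) (hfg x (hBA hx))
  · exact Or.inr fun x hx => hr.2.1 _ (hg.1 (hBA hx)) _ (hf.1 (hBA hx)) (hgf x (hBA hx))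

lemma comp_right (h : posetDefStep Γ B Q f g) (hr : IsDefPosetMap Γ A Q r) (hrB : MapsTo r A B)
    (hBA : B ⊆ A) : posetDefStep Γ A Q (f ∘ r) (g ∘ r) := by
  obtain ⟨hf, hg, hfg | hgf⟩ := h
  all_goals refine ⟨hf.comp hr hrB (hf.1.mono_right hBA),
    hg.comp hr hrB (hg.1.mono_right hBA), ?_⟩
  · exact Or.inl fun x hx => hfg (r x) (hrB hx)
  · exact Or.inr fun x hx => hgf (r x) (hrB hx)

end posetDefStep

namespace StronglyCollapsesOn

lemma trans (h₁ : StronglyCollapsesOn Γ A B) (h₂ : StronglyCollapsesOn Γ B C) (hBA : B ⊆ A)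
    (hCB : C ⊆ B) : StronglyCollapsesOn Γ A C := by
  obtain ⟨r, hr, hid_r, hrB : MapsTo r A B⟩ := h₁
  obtain ⟨g, hg, hid_g, hgC⟩ := h₂
  have hrC := hr.of_subset hCB
  refine ⟨g ∘ r, hg.comp hrC hrB (hg.1.mono_right hBA), ?_, fun x hx => hgC _ (hrB hx)⟩
  have hid_r' := Relation.ReflTransGen.mono (fun _ _ h => h.of_subset hCB) _ _ hid_r
  exact hid_r'.trans <|
    Relation.ReflTransGen.lift (· ∘ r) (fun _ _ h => h.comp_right hrC hrB hBA) _ _ hid_g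

lemma cancel_left (h₁ : StronglyCollapsesOn Γ A B) (h : StronglyCollapsesOn Γ A C)
    (hBA : B ⊆ A) (hCB : C ⊆ B) : StronglyCollapsesOn Γ B C := by
  obtain ⟨r, hr, -, hrB : MapsTo r A B⟩ := h₁
  obtain ⟨f, hf, hid_f, hfC⟩ := h
  have hrC := hr.of_subset hCB
  have hid_r := posetDefStep_id_of_eqOn (hrC.restrict hBA (hrB.mono_left hBA)) hr.2.2.2
  refine ⟨r ∘ f, hrC.retract_comp hrB hBA hf, ?_, fun x hx => ?_⟩
  · exact Relation.ReflTransGen.head hid_r <|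
      Relation.ReflTransGen.lift (r ∘ ·) (fun _ _ h => h.comp_left hrC hrB hBA) _ _ hid_f
  · have hfx : f x ∈ C := hfC x (hBA hx)
    rwa [Function.comp_apply, hrC.2.2.2 _ hfx]

end StronglyCollapsesOn

end

theorem stronglyCollapses_iff_of_stronglyCollapses_general {Γ P : Type*} [Group Γ]
    [PartialOrder P] [MulAction Γ P]
    (Q P' : Set P) (hQP' : Q ⊆ P')
    (hcol : StronglyCollapsesOn Γ Set.univ P') :
    StronglyCollapsesOn Γ Set.univ Q ↔ StronglyCollapsesOn Γ P' Q :=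
  ⟨fun h => hcol.cancel_left h (Set.subset_univ P') hQP',
    fun h => hcol.trans h (Set.subset_univ P') hQP'⟩

/-- Let Γ be a finite group and Q ⊆ P' ⊆ P a chain of induced Γ-subposets of a
Γ-poset P, and suppose that P strongly Γ-collapses to P'.  Then P strongly Γ-collapses to Q if
and only if P' strongly Γ-collapses to Q. -/
theorem stronglyCollapses_iff_of_stronglyCollapses {Γ P : Type*} [Group Γ] [Finite Γ]
    [PartialOrder P] [MulAction Γ P] (hmono : ∀ γ : Γ, Monotone fun x : P => γ • x)
    (Q P' : Set P) (hQP' : Q ⊆ P')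
    (hQinv : ∀ γ : Γ, ∀ x ∈ Q, γ • x ∈ Q) (hP'inv : ∀ γ : Γ, ∀ x ∈ P', γ • x ∈ P')
    (hcol : StronglyCollapsesOn Γ Set.univ P') :
    StronglyCollapsesOn Γ Set.univ Q ↔ StronglyCollapsesOn Γ P' Q :=
  stronglyCollapses_iff_of_stronglyCollapses_general Q P' hQP' hcol
end

section
/- Let Γ be a finite group, K and L Γ-simplicial complexes, and f, g : K → L Γ-equivariant simplicial maps which are strongly Γ-homotopic. Then the induced order-preserving maps Ff, Fg : FK → FL between the face posets are strongly Γ-homotopic. -/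
/-- An abstract simplicial complex on the vertex type `V`: a family of finite subsets of `V`
closed under taking subsets. -/
structure Cplx (V : Type*) where
  faces : Set (Set V)
  finite_mem : ∀ σ ∈ faces, Set.Finite σ
  down_closed : ∀ σ ∈ faces, ∀ τ ⊆ σ, τ ∈ faces

/-- The vertex set of a simplicial complex. -/
def Cplx.verts {V : Type*} (K : Cplx V) : Set V := {v | ({v} : Set V) ∈ K.faces}

/-- `a` is an action of the group `Γ` on the vertex type of `K` by simplicial automorphisms. -/
def IsCplxAction (Γ : Type*) [Group Γ] {V : Type*} (a : Γ → V → V) (K : Cplx V) : Prop :=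
  (∀ v, a 1 v = v) ∧ (∀ γ γ' : Γ, ∀ v, a (γ * γ') v = a γ (a γ' v)) ∧
    ∀ γ : Γ, ∀ σ ∈ K.faces, (a γ) '' σ ∈ K.faces

/-- A simplicial multi-map from `K` to `L`: it assigns to each vertex of `K` a nonempty subset
of the vertices of `L`, so that `⋃ v ∈ σ, η v` is a simplex of `L` for every simplex `σ` of
`K`. -/
def IsMultiMap {V W : Type*} (K : Cplx V) (L : Cplx W) (η : V → Set W) : Prop :=
  (∀ v ∈ K.verts, (η v).Nonempty) ∧ ∀ σ ∈ K.faces, (⋃ v ∈ σ, η v) ∈ L.faces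

/-- A Γ-equivariant simplicial multi-map, i.e. an element of `Map_Γ(K, L)`. -/
def IsEquivMultiMap (Γ : Type*) [Group Γ] {V W : Type*} (a : Γ → V → V) (b : Γ → W → W)
    (K : Cplx V) (L : Cplx W) (η : V → Set W) : Prop :=
  IsMultiMap K L η ∧ ∀ γ : Γ, ∀ v ∈ K.verts, η (a γ v) = (b γ) '' (η v)

/-- Pointwise order on multi-maps out of `K` (on the vertices of `K`). -/
def mmLE {V W : Type*} (K : Cplx V) (η η' : V → Set W) : Prop := ∀ v ∈ K.verts, η v ⊆ η' v

/-- An element of `Def_Γ(K, L)`: a Γ-equivariant simplicial multi-map `K → K` with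
`η v = {v}` for every vertex `v` of the subcomplex `L`. -/
def IsDefMultiMap (Γ : Type*) [Group Γ] {V : Type*} (a : Γ → V → V) (K L : Cplx V)
    (η : V → Set V) : Prop :=
  IsEquivMultiMap Γ a a K K η ∧ ∀ v ∈ L.verts, η v = {v}

/-- One step of a zigzag in `Def_Γ(K, L)`: both multi-maps lie in `Def_Γ(K, L)` and they are
comparable. -/
def cplxDefStep (Γ : Type*) [Group Γ] {V : Type*} (a : Γ → V → V) (K L : Cplx V)
    (η η' : V → Set V) : Prop :=
  IsDefMultiMap Γ a K L η ∧ IsDefMultiMap Γ a K L η' ∧ (mmLE K η η' ∨ mmLE K η' η)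

/-- The Γ-simplicial complex `K` strongly Γ-collapses to its Γ-subcomplex `L`: there is a
simplicial map `f` belonging to the identity component of `Def_Γ(K, L)` (joined to the
identity by a finite zigzag of pairwise comparable elements) whose image is contained in
`L`. -/
def CplxCollapses (Γ : Type*) [Group Γ] {V : Type*} (a : Γ → V → V) (K L : Cplx V) : Prop :=
  ∃ f : V → V, IsDefMultiMap Γ a K L (fun v => {f v}) ∧
    Relation.ReflTransGen (cplxDefStep Γ a K L) (fun v => {v}) (fun v => {f v}) ∧
    ∀ σ ∈ K.faces, f '' σ ∈ L.faces
/-- The face poset of `K`, realized as the set of nonempty simplices of `K` inside the poset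
`Set V` (ordered by inclusion). -/
def facePoset {V : Type*} (K : Cplx V) : Set (Set V) := {σ | σ ∈ K.faces ∧ σ.Nonempty}

/-- The barycentric subdivision `Sd(K) = Δ(FK)`: the simplicial complex on the nonempty
simplices of `K` whose simplices are the finite chains of the face poset of `K`. -/
def sd {V : Type*} (K : Cplx V) : Cplx (Set V) where
  faces := {c | c.Finite ∧ (∀ σ ∈ c, σ ∈ facePoset K) ∧ IsChain (· ⊆ ·) c}
  finite_mem := fun _ h => h.1
  down_closed := fun c hc d hdc =>
    ⟨hc.1.subset hdc, fun σ hσ => hc.2.1 σ (hdc hσ),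
      by exact fun x hx y hy hxy => hc.2.2 (hdc hx) (hdc hy) hxy⟩

/-- Two multi-maps are strongly Γ-homotopic: they lie in the same connected component of
`Map_Γ(K, L)`, i.e. they are joined by a finite zigzag of pairwise comparable Γ-equivariant
simplicial multi-maps. -/
def StronglyGHomotopicMM (Γ : Type*) [Group Γ] {V W : Type*} (a : Γ → V → V) (b : Γ → W → W)
    (K : Cplx V) (L : Cplx W) (η η' : V → Set W) : Prop :=
  Relation.ReflTransGen
    (fun θ θ' => IsEquivMultiMap Γ a b K L θ ∧ IsEquivMultiMap Γ a b K L θ' ∧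
      (mmLE K θ θ' ∨ mmLE K θ' θ)) η η'

/-- A Γ-equivariant order-preserving map from the induced subposet `A` of `P` to the induced
subposet `B` of `Q`, i.e. an element of `Poset_Γ(A, B)`. -/
def IsGPosetMapOn (Γ : Type*) [Group Γ] {P Q : Type*} [PartialOrder P] [PartialOrder Q]
    (aP : Γ → P → P) (aQ : Γ → Q → Q) (A : Set P) (B : Set Q) (f : P → Q) : Prop :=
  Set.MapsTo f A B ∧ (∀ x ∈ A, ∀ y ∈ A, x ≤ y → f x ≤ f y) ∧
    ∀ γ : Γ, ∀ x ∈ A, f (aP γ x) = aQ γ (f x)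

/-- Two Γ-poset maps are strongly Γ-homotopic: they lie in the same connected component of
`Poset_Γ(A, B)` (joined by a finite zigzag of pairwise comparable Γ-poset maps). -/
def StronglyGHomotopicPosetOn (Γ : Type*) [Group Γ] {P Q : Type*} [PartialOrder P]
    [PartialOrder Q] (aP : Γ → P → P) (aQ : Γ → Q → Q) (A : Set P) (B : Set Q)
    (f g : P → Q) : Prop :=
  Relation.ReflTransGen
    (fun h h' => IsGPosetMapOn Γ aP aQ A B h ∧ IsGPosetMapOn Γ aP aQ A B h' ∧
      ((∀ x ∈ A, h x ≤ h' x) ∨ (∀ x ∈ A, h' x ≤ h x))) f g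

/-! The face-poset construction extends from simplicial maps to multi-maps by
`σ ↦ ⋃ v ∈ σ, η v`. This extension sends Γ-equivariant multi-maps to Γ-poset maps, is monotone,
and restricts to `σ ↦ f '' σ` on a simplicial map `f`; so it carries every zigzag in
`Map_Γ(K, L)` from `f` to `g` to a zigzag in `Poset_Γ(FK, FL)` from `Ff` to `Fg`. -/

lemma Cplx.mem_verts_of_mem_faces {V : Type*} {K : Cplx V} {σ : Set V} (hσ : σ ∈ K.faces)
    {v : V} (hv : v ∈ σ) : v ∈ K.verts :=
  K.down_closed σ hσ {v} (Set.singleton_subset_iff.2 hv)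

def multiMapFaceMap {V W : Type*} (η : V → Set W) (σ : Set V) : Set W := ⋃ v ∈ σ, η v

lemma multiMapFaceMap_singleton {V W : Type*} (f : V → W) :
    multiMapFaceMap (fun v => {f v}) = (f '' ·) := by
  funext σ
  simp [multiMapFaceMap, Set.image_eq_iUnion]

section

variable {Γ V W : Type*} [Group Γ] {a : Γ → V → V} {b : Γ → W → W} {K : Cplx V} {L : Cplx W}
  {η η' : V → Set W}

lemma IsEquivMultiMap.isGPosetMapOn_multiMapFaceMap (hη : IsEquivMultiMap Γ a b K L η) :
    IsGPosetMapOn Γ (fun γ (σ : Set V) => (a γ) '' σ) (fun γ (σ : Set W) => (b γ) '' σ)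
      (facePoset K) (facePoset L) (multiMapFaceMap η) := by
  obtain ⟨⟨hne, hface⟩, hequiv⟩ := hη
  refine ⟨?_, fun σ _ τ _ hστ => Set.biUnion_subset_biUnion_left hστ, ?_⟩
  · rintro σ ⟨hσ, v, hv⟩
    obtain ⟨w, hw⟩ := hne v (Cplx.mem_verts_of_mem_faces hσ hv)
    exact ⟨hface σ hσ, w, Set.mem_biUnion hv hw⟩
  · rintro γ σ ⟨hσ, -⟩
    calc multiMapFaceMap η (a γ '' σ) = ⋃ v ∈ σ, η (a γ v) := Set.biUnion_image
      _ = ⋃ v ∈ σ, b γ '' η v :=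
          Set.iUnion₂_congr fun v hv => hequiv γ v (Cplx.mem_verts_of_mem_faces hσ hv)
      _ = b γ '' multiMapFaceMap η σ := (Set.image_iUnion₂ _ _).symm

lemma multiMapFaceMap_mono (h : mmLE K η η') :
    ∀ σ ∈ facePoset K, multiMapFaceMap η σ ⊆ multiMapFaceMap η' σ :=
  fun _ hσ => Set.iUnion₂_mono fun v hv => h v (Cplx.mem_verts_of_mem_faces hσ.1 hv)

lemma StronglyGHomotopicMM.multiMapFaceMap (h : StronglyGHomotopicMM Γ a b K L η η') :
    StronglyGHomotopicPosetOn Γ (fun γ (σ : Set V) => (a γ) '' σ)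
      (fun γ (σ : Set W) => (b γ) '' σ) (facePoset K) (facePoset L)
      (multiMapFaceMap η) (multiMapFaceMap η') := by
  refine Relation.ReflTransGen.lift _ (fun θ θ' ⟨hθ, hθ', hle⟩ => ?_) _ _ h
  exact ⟨hθ.isGPosetMapOn_multiMapFaceMap, hθ'.isGPosetMapOn_multiMapFaceMap,
    hle.imp multiMapFaceMap_mono multiMapFaceMap_mono⟩

end

theorem facePoset_map_strongly_homotopic_general {Γ V W : Type*} [Group Γ]
    (a : Γ → V → V) (b : Γ → W → W) (K : Cplx V) (L : Cplx W)
    (f g : V → W)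
    (hfg : StronglyGHomotopicMM Γ a b K L (fun v => {f v}) (fun v => {g v})) :
    StronglyGHomotopicPosetOn Γ (fun γ (σ : Set V) => (a γ) '' σ)
      (fun γ (σ : Set W) => (b γ) '' σ) (facePoset K) (facePoset L)
      (fun σ => f '' σ) (fun σ => g '' σ) := by
  simpa only [multiMapFaceMap_singleton] using hfg.multiMapFaceMap

/-- Let Γ be a finite group, K and L Γ-simplicial complexes, and f, g : K → L
Γ-equivariant simplicial maps which are strongly Γ-homotopic.  Then the induced
order-preserving maps Ff, Fg : FK → FL between the face posets are strongly Γ-homotopic. -/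
theorem facePoset_map_strongly_homotopic {Γ V W : Type*} [Group Γ] [Finite Γ]
    (a : Γ → V → V) (b : Γ → W → W) (K : Cplx V) (L : Cplx W)
    (ha : IsCplxAction Γ a K) (hb : IsCplxAction Γ b L) (f g : V → W)
    (hf : ∀ σ ∈ K.faces, f '' σ ∈ L.faces) (hg : ∀ σ ∈ K.faces, g '' σ ∈ L.faces)
    (hfe : ∀ γ : Γ, ∀ v ∈ K.verts, f (a γ v) = b γ (f v))
    (hge : ∀ γ : Γ, ∀ v ∈ K.verts, g (a γ v) = b γ (g v))
    (hfg : StronglyGHomotopicMM Γ a b K L (fun v => {f v}) (fun v => {g v})) :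
    StronglyGHomotopicPosetOn Γ (fun γ (σ : Set V) => (a γ) '' σ)
      (fun γ (σ : Set W) => (b γ) '' σ) (facePoset K) (facePoset L)
      (fun σ => f '' σ) (fun σ => g '' σ) :=
  facePoset_map_strongly_homotopic_general a b K L f g hfg
end

section
/- Let Γ be a finite group, P a finite Γ-poset and Q an induced Γ-subposet of P. If P strongly Γ-collapses to Q, then the order complex Δ(P) strongly Γ-collapses to Δ(Q). -/
/-- The order complex of the subset `S` of the poset `P`: its simplices are the finite chains
of `P` contained in `S`.  `orderCplx Set.univ` is the order complex `Δ(P)`. -/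
def orderCplx {P : Type*} [PartialOrder P] (S : Set P) : Cplx P where
  faces := {σ | σ.Finite ∧ σ ⊆ S ∧ IsChain (· ≤ ·) σ}
  finite_mem := fun _ h => h.1
  down_closed := fun _ h τ hτσ =>
    ⟨h.1.subset hτσ, hτσ.trans h.2.1, fun x hx y hy hxy => h.2.2 (hτσ hx) (hτσ hy) hxy⟩

/-! If `f ≤ g` in `Def_Γ(P, Q)` disagree only on an antichain, the multi-map `v ↦ {f v, g v}` lies
in `Def_Γ(Δ(P), Δ(Q))` above both `{f}` and `{g}`: for `a < b` one has `g a ≤ f b`, since `a` and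
`b` cannot both be points of disagreement. An arbitrary comparable pair `f ≤ g` reduces to this
case by raising `f` to `g` at all maximal points of disagreement at once (a Γ-invariant antichain)
and inducting on the set of disagreement. So every zigzag in `Def_Γ(P, Q)` lifts to one of
simplicial maps, and its end map sends chains of `P` to chains of `Q`. -/

section OrderComplex

variable {P R : Type*} [PartialOrder P] [PartialOrder R]

lemma orderCplx_verts (S : Set P) : (orderCplx S).verts = S := by
  ext v
  refine ⟨fun ⟨_, hv, _⟩ => hv rfl, fun hv => ?_⟩
  exact ⟨Set.finite_singleton v, Set.singleton_subset_iff.mpr hv,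
    Set.subsingleton_singleton.isChain⟩

lemma image_mem_orderCplx_faces {S : Set P} {T : Set R} {f : P → R} (hf : Monotone f)
    (hST : Set.MapsTo f S T) {σ : Set P} (hσ : σ ∈ (orderCplx S).faces) :
    f '' σ ∈ (orderCplx T).faces :=
  ⟨hσ.1.image f, (hST.mono_left hσ.2.1).image_subset, hf.isChain_image hσ.2.2⟩

end OrderComplex

section Antichain

variable {P : Type*} [PartialOrder P] {f g : P → P}

lemma le_of_lt_of_isAntichain_ne (hf : Monotone f) (hg : Monotone g)
    (hD : IsAntichain (· ≤ ·) {x | f x ≠ g x}) {a b : P} (hab : a < b) : g a ≤ f b := by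
  by_cases ha : f a = g a
  · exact ha ▸ hf hab.le
  · have hb : f b = g b := not_not.mp fun hb => hD ha hb hab.ne hab.le
    exact hb ▸ hg hab.le

lemma isChain_biUnion_pair (hf : Monotone f) (hg : Monotone g) (hfg : f ≤ g)
    (hD : IsAntichain (· ≤ ·) {x | f x ≠ g x}) {σ : Set P} (hσ : IsChain (· ≤ ·) σ) :
    IsChain (· ≤ ·) (⋃ v ∈ σ, ({f v, g v} : Set P)) := by
  have hle : ∀ a b, a < b → ∀ p ∈ ({f a, g a} : Set P), ∀ q ∈ ({f b, g b} : Set P), p ≤ q := by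
    rintro a b hab p (rfl | rfl) q (rfl | rfl)
    exacts [hf hab.le, (hf hab.le).trans (hfg b), le_of_lt_of_isAntichain_ne hf hg hD hab,
      hg hab.le]
  simp only [IsChain, Set.Pairwise, Set.mem_iUnion, exists_prop]
  rintro p ⟨a, ha, hp⟩ q ⟨b, hb, hq⟩ -
  rcases eq_or_ne a b with rfl | hne
  · rcases hp with rfl | rfl <;> rcases hq with rfl | rfl <;> simp [hfg a]
  · rcases (hσ ha hb hne).imp hne.lt_of_le (hne.symm.lt_of_le) with hab | hba
    exacts [.inl (hle a b hab p hp q hq), .inr (hle b a hba q hq p hp)]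

end Antichain

instance {Γ V : Type*} [Group Γ] (a : Γ → V → V) (K L : Cplx V) :
    Std.Symm (cplxDefStep Γ a K L) :=
  ⟨fun _ _ ⟨h₁, h₂, h₁₂⟩ => ⟨h₂, h₁, h₁₂.symm⟩⟩

section DefMaps

variable {Γ P : Type*} [Group Γ] [PartialOrder P] [MulAction Γ P] {Q : Set P} {f g : P → P}

lemma IsDefPosetMap.monotone (hf : IsDefPosetMap Γ Set.univ Q f) : Monotone f :=
  fun x y hxy => hf.2.1 x trivial y trivial hxy

lemma IsDefPosetMap.smul_apply (hf : IsDefPosetMap Γ Set.univ Q f) (γ : Γ) (x : P) :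
    f (γ • x) = γ • f x :=
  hf.2.2.1 γ x trivial

lemma IsDefPosetMap.apply_of_mem (hf : IsDefPosetMap Γ Set.univ Q f) {y : P} (hy : y ∈ Q) :
    f y = y :=
  hf.2.2.2 y hy

lemma isDefMultiMap_pair (hf : IsDefPosetMap Γ Set.univ Q f) (hg : IsDefPosetMap Γ Set.univ Q g)
    (hfg : f ≤ g) (hD : IsAntichain (· ≤ ·) {x | f x ≠ g x}) :
    IsDefMultiMap Γ (fun γ (x : P) => γ • x) (orderCplx Set.univ) (orderCplx Q)
      (fun v => {f v, g v}) := by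
  refine ⟨⟨⟨fun v _ => Set.insert_nonempty _ _, fun σ hσ => ⟨?_, Set.subset_univ _, ?_⟩⟩,
    fun γ v _ => ?_⟩, fun v hv => ?_⟩
  · exact hσ.1.biUnion fun v _ => Set.toFinite _
  · exact isChain_biUnion_pair hf.monotone hg.monotone hfg hD hσ.2.2
  · simp only [hf.smul_apply, hg.smul_apply, Set.image_pair]
  · rw [orderCplx_verts] at hv
    simp only [hf.apply_of_mem hv, hg.apply_of_mem hv, Set.pair_eq_singleton]

lemma isDefMultiMap_singleton (hf : IsDefPosetMap Γ Set.univ Q f) :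
    IsDefMultiMap Γ (fun γ (x : P) => γ • x) (orderCplx Set.univ) (orderCplx Q)
      (fun v => {f v}) := by
  simpa using isDefMultiMap_pair hf hf le_rfl (by simp [IsAntichain])

lemma cplxDefStep_reflTransGen_of_isAntichain (hf : IsDefPosetMap Γ Set.univ Q f)
    (hg : IsDefPosetMap Γ Set.univ Q g) (hfg : f ≤ g) (hD : IsAntichain (· ≤ ·) {x | f x ≠ g x}) :
    Relation.ReflTransGen
      (cplxDefStep Γ (fun γ (x : P) => γ • x) (orderCplx Set.univ) (orderCplx Q))
      (fun v => {f v}) (fun v => {g v}) := by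
  have hpair := isDefMultiMap_pair hf hg hfg hD
  refine .head ⟨isDefMultiMap_singleton hf, hpair, .inl fun v _ => ?_⟩
    (.single ⟨hpair, isDefMultiMap_singleton hg, .inr fun v _ => ?_⟩) <;> simp

end DefMaps

section Raise

variable {P : Type*} [PartialOrder P]

open Classical in
noncomputable def raiseMaximal (f g : P → P) (x : P) : P :=
  if Maximal (fun y => f y ≠ g y) x then g x else f x

variable {f g : P → P}

lemma raiseMaximal_of_maximal {x : P} (hx : Maximal (fun y => f y ≠ g y) x) :
    raiseMaximal f g x = g x :=
  if_pos hx

lemma raiseMaximal_of_not_maximal {x : P} (hx : ¬Maximal (fun y => f y ≠ g y) x) :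
    raiseMaximal f g x = f x :=
  if_neg hx

lemma raiseMaximal_of_eq {x : P} (hx : f x = g x) : raiseMaximal f g x = f x := by
  unfold raiseMaximal; split_ifs <;> simp [hx]

lemma le_raiseMaximal (hfg : f ≤ g) : f ≤ raiseMaximal f g := fun x => by
  by_cases hx : Maximal (fun y => f y ≠ g y) x
  · simpa [raiseMaximal_of_maximal hx] using hfg x
  · simp [raiseMaximal_of_not_maximal hx]

lemma raiseMaximal_le (hfg : f ≤ g) : raiseMaximal f g ≤ g := fun x => by
  by_cases hx : Maximal (fun y => f y ≠ g y) x
  · simp [raiseMaximal_of_maximal hx]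
  · simpa [raiseMaximal_of_not_maximal hx] using hfg x

lemma monotone_raiseMaximal (hf : Monotone f) (hg : Monotone g) (hfg : f ≤ g) :
    Monotone (raiseMaximal f g) := by
  intro x y hxy
  by_cases hy : Maximal (fun z => f z ≠ g z) y
  · rw [raiseMaximal_of_maximal hy]
    exact (raiseMaximal_le hfg x).trans (hg hxy)
  rw [raiseMaximal_of_not_maximal hy]
  by_cases hx : Maximal (fun z => f z ≠ g z) x
  · have hlt : x < y := hxy.lt_of_ne fun h => hy (h ▸ hx)
    have hfy : f y = g y := not_not.mp fun hne => hlt.not_ge (hx.2 hne hxy)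
    rw [raiseMaximal_of_maximal hx, hfy]
    exact hg hxy
  · rw [raiseMaximal_of_not_maximal hx]
    exact hf hxy

lemma isAntichain_raiseMaximal_ne :
    IsAntichain (· ≤ ·) {x | f x ≠ raiseMaximal f g x} :=
  (setOfPred_maximal_antichain fun y => f y ≠ g y).subset fun _ hx => by_contra fun hmax =>
    hx (raiseMaximal_of_not_maximal hmax).symm

lemma raiseMaximal_ne_ssubset [Finite P] (hD : {x | f x ≠ g x}.Nonempty) :
    {x | raiseMaximal f g x ≠ g x} ⊂ {x | f x ≠ g x} := by
  obtain ⟨x₀, hx₀⟩ := (Set.toFinite _).exists_maximal hD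
  refine Set.ssubset_iff_of_subset (fun x (hx : raiseMaximal f g x ≠ g x) => ?_) |>.mpr
    ⟨x₀, hx₀.1, ?_⟩
  · by_cases hmax : Maximal (fun y => f y ≠ g y) x
    · exact absurd (raiseMaximal_of_maximal hmax) hx
    · rwa [raiseMaximal_of_not_maximal hmax] at hx
  · exact not_not.mpr (raiseMaximal_of_maximal hx₀)

end Raise

section Zigzag

variable {Γ P : Type*} [Group Γ] [PartialOrder P] [MulAction Γ P] {Q : Set P} {f g : P → P}

lemma maximal_smul_iff (hmono : ∀ γ : Γ, Monotone fun x : P => γ • x) {p : P → Prop}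
    (hp : ∀ (γ : Γ) x, p (γ • x) ↔ p x) (γ : Γ) (x : P) : Maximal p (γ • x) ↔ Maximal p x := by
  suffices h : ∀ (γ : Γ) x, Maximal p (γ • x) → Maximal p x from
    ⟨h γ x, fun hx => h γ⁻¹ (γ • x) (by rwa [inv_smul_smul])⟩
  intro γ x hx
  refine ⟨(hp γ x).mp hx.1, fun y hy hxy => ?_⟩
  simpa using hmono γ⁻¹ (hx.2 ((hp γ y).mpr hy) (hmono γ hxy))

lemma isDefPosetMap_raiseMaximal (hmono : ∀ γ : Γ, Monotone fun x : P => γ • x)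
    (hf : IsDefPosetMap Γ Set.univ Q f) (hg : IsDefPosetMap Γ Set.univ Q g) (hfg : f ≤ g) :
    IsDefPosetMap Γ Set.univ Q (raiseMaximal f g) := by
  have hD (γ : Γ) (x : P) : f (γ • x) ≠ g (γ • x) ↔ f x ≠ g x := by
    simp only [hf.smul_apply, hg.smul_apply, ne_eq, smul_left_cancel_iff]
  refine ⟨fun _ _ => trivial, fun x _ y _ hxy =>
    monotone_raiseMaximal hf.monotone hg.monotone hfg hxy, fun γ x _ => ?_, fun y hy => ?_⟩
  · by_cases hx : Maximal (fun y => f y ≠ g y) x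
    · rw [raiseMaximal_of_maximal hx,
        raiseMaximal_of_maximal ((maximal_smul_iff hmono hD γ x).mpr hx), hg.smul_apply]
    · rw [raiseMaximal_of_not_maximal hx,
        raiseMaximal_of_not_maximal (mt (maximal_smul_iff hmono hD γ x).mp hx), hf.smul_apply]
  · rw [raiseMaximal_of_eq (by rw [hf.apply_of_mem hy, hg.apply_of_mem hy]), hf.apply_of_mem hy]

lemma cplxDefStep_reflTransGen_of_le [Finite P] (hmono : ∀ γ : Γ, Monotone fun x : P => γ • x)
    (hf : IsDefPosetMap Γ Set.univ Q f) (hg : IsDefPosetMap Γ Set.univ Q g) (hfg : f ≤ g) :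
    Relation.ReflTransGen
      (cplxDefStep Γ (fun γ (x : P) => γ • x) (orderCplx Set.univ) (orderCplx Q))
      (fun v => {f v}) (fun v => {g v}) := by
  induction hD : {x | f x ≠ g x} using WellFoundedLT.induction generalizing f with
  | ind D ih =>
    obtain rfl | hne := D.eq_empty_or_nonempty
    · obtain rfl : f = g := funext fun x => not_not.mp (Set.eq_empty_iff_forall_notMem.mp hD x)
      exact .refl
    subst hD
    exact (cplxDefStep_reflTransGen_of_isAntichain hf (isDefPosetMap_raiseMaximal hmono hf hg hfg)
      (le_raiseMaximal hfg) isAntichain_raiseMaximal_ne).trans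
      (ih _ (raiseMaximal_ne_ssubset hne) (isDefPosetMap_raiseMaximal hmono hf hg hfg)
        (raiseMaximal_le hfg) rfl)

end Zigzag

theorem orderCplx_collapses_of_stronglyCollapses_general {Γ P : Type*} [Group Γ]
    [PartialOrder P] [Finite P] [MulAction Γ P]
    (hmono : ∀ γ : Γ, Monotone fun x : P => γ • x)
    (Q : Set P)
    (h : StronglyCollapsesOn Γ Set.univ Q) :
    CplxCollapses Γ (fun γ (x : P) => γ • x) (orderCplx (Set.univ : Set P)) (orderCplx Q) := by
  obtain ⟨f, hf, hzigzag, himg⟩ := h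
  refine ⟨f, isDefMultiMap_singleton hf, ?_, fun σ hσ =>
    image_mem_orderCplx_faces hf.monotone (fun x _ => himg x trivial) hσ⟩
  refine hzigzag.lift' (fun g v => ({g v} : Set P)) fun g₁ g₂ ⟨hg₁, hg₂, hle⟩ => ?_
  rcases hle with hle | hle
  · exact cplxDefStep_reflTransGen_of_le hmono hg₁ hg₂ fun x => hle x trivial
  · exact Std.Symm.symm _ _ (cplxDefStep_reflTransGen_of_le hmono hg₂ hg₁ fun x => hle x trivial)

/-- Let Γ be a finite group, P a finite Γ-poset and Q an induced Γ-subposet of P.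
If P strongly Γ-collapses to Q, then the order complex Δ(P) strongly Γ-collapses to Δ(Q). -/
theorem orderCplx_collapses_of_stronglyCollapses {Γ P : Type*} [Group Γ] [Finite Γ]
    [PartialOrder P] [Finite P] [MulAction Γ P]
    (hmono : ∀ γ : Γ, Monotone fun x : P => γ • x)
    (Q : Set P) (hQinv : ∀ γ : Γ, ∀ x ∈ Q, γ • x ∈ Q)
    (h : StronglyCollapsesOn Γ Set.univ Q) :
    CplxCollapses Γ (fun γ (x : P) => γ • x) (orderCplx (Set.univ : Set P)) (orderCplx Q) :=
  orderCplx_collapses_of_stronglyCollapses_general hmono Q h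
end

section
/- If v is a dismantlable vertex of a graph G, then the inclusion G \ v ↪ G is a ×-homotopy equivalence. -/
/-- A graph: a symmetric (loops allowed) adjacency relation on the vertex type `V`. -/
structure SymGraph (V : Type*) where
  Adj : V → V → Prop
  symm : ∀ v w, Adj v w → Adj w v

/-- A graph homomorphism from `G` to `H`. -/
def IsGraphHom {V W : Type*} (G : SymGraph V) (H : SymGraph W) (f : V → W) : Prop :=
  ∀ v w, G.Adj v w → H.Adj (f v) (f w)

/-- A multi-homomorphism from `G` to `H`: it assigns to each vertex of `G` a nonempty set of
vertices of `H` so that adjacent vertices have completely adjacent images.  The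
multi-homomorphisms, ordered pointwise by inclusion, form the Hom complex `Hom(G, H)`. -/
def IsMultiHom {V W : Type*} (G : SymGraph V) (H : SymGraph W) (η : V → Set W) : Prop :=
  (∀ v, (η v).Nonempty) ∧ ∀ v w, G.Adj v w → ∀ x ∈ η v, ∀ y ∈ η w, H.Adj x y

/-- One step of a zigzag in `Hom(G, H)`: both multi-homomorphisms are comparable. -/
def mhStep {V W : Type*} (G : SymGraph V) (H : SymGraph W) (η η' : V → Set W) : Prop :=
  IsMultiHom G H η ∧ IsMultiHom G H η' ∧ ((∀ v, η v ⊆ η' v) ∨ (∀ v, η' v ⊆ η v))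

/-- Two graph homomorphisms are ×-homotopic iff they lie in the same connected component of
the Hom complex `Hom(G, H)`. -/
def XHomotopic {V W : Type*} (G : SymGraph V) (H : SymGraph W) (f g : V → W) : Prop :=
  Relation.ReflTransGen (mhStep G H) (fun v => {f v}) (fun v => {g v})

/-- `f : G → H` is a ×-homotopy equivalence. -/
def IsXHomotopyEquiv {V W : Type*} (G : SymGraph V) (H : SymGraph W) (f : V → W) : Prop :=
  IsGraphHom G H f ∧ ∃ h : W → V, IsGraphHom H G h ∧
    XHomotopic G G (h ∘ f) id ∧ XHomotopic H H (f ∘ h) id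

/-- The induced subgraph of `G` on the vertex set `S`. -/
def SymGraph.induce {V : Type*} (G : SymGraph V) (S : Set V) : SymGraph S where
  Adj x y := G.Adj x y
  symm := fun x y h => G.symm _ _ h

/-- The vertex `v` of `G` is dismantlable: some vertex `w ≠ v` satisfies `N(v) ⊆ N(w)`. -/
def IsDismantlable {V : Type*} (G : SymGraph V) (v : V) : Prop :=
  ∃ w, w ≠ v ∧ ∀ u, G.Adj u v → G.Adj u w


/-!
Fold `v` onto a vertex `w ≠ v` with `N(v) ⊆ N(w)`: the map `r` sending `v` to `w` and fixing
everything else retracts `G` onto `G \ v`. Since `N(u) ⊆ N(r u)` for every `u`, the assignment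
`u ↦ {r u, u}` is a multi-homomorphism `G → G` containing both `r` and `id`, so `r ≃ id`.
-/

def SymGraph.IsDominatedBy {V : Type*} (G : SymGraph V) (v w : V) : Prop :=
  ∀ u, G.Adj u v → G.Adj u w

section HomComplex

variable {V W : Type*} {G : SymGraph V} {H : SymGraph W}

theorem IsGraphHom.isMultiHom_singleton {f : V → W} (hf : IsGraphHom G H f) :
    IsMultiHom G H (fun x => {f x}) := by
  refine ⟨fun _ => Set.singleton_nonempty _, ?_⟩
  rintro a b hab _ rfl _ rfl
  exact hf a b hab

theorem XHomotopic.of_forall_mem {f g : V → W} {η : V → Set W} (hf : IsGraphHom G H f)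
    (hg : IsGraphHom G H g) (hη : IsMultiHom G H η) (hfη : ∀ x, f x ∈ η x)
    (hgη : ∀ x, g x ∈ η x) : XHomotopic G H f g :=
  (Relation.ReflTransGen.single
      ⟨hf.isMultiHom_singleton, hη, Or.inl fun x => Set.singleton_subset_iff.2 (hfη x)⟩).tail
    ⟨hη, hg.isMultiHom_singleton, Or.inr fun x => Set.singleton_subset_iff.2 (hgη x)⟩

theorem isMultiHom_pair {f g : V → W} (hf : IsGraphHom G H f) (hg : IsGraphHom G H g)
    (hfg : ∀ a b, G.Adj a b → H.Adj (f a) (g b)) : IsMultiHom G H (fun x => {f x, g x}) := by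
  refine ⟨fun _ => Set.insert_nonempty _ _, ?_⟩
  rintro a b hab x (rfl | rfl) y (rfl | rfl)
  · exact hf a b hab
  · exact hfg a b hab
  · exact H.symm _ _ (hfg b a (G.symm _ _ hab))
  · exact hg a b hab

theorem XHomotopic.of_adj {f g : V → W} (hf : IsGraphHom G H f) (hg : IsGraphHom G H g)
    (hfg : ∀ a b, G.Adj a b → H.Adj (f a) (g b)) : XHomotopic G H f g :=
  .of_forall_mem hf hg (isMultiHom_pair hf hg hfg) (fun _ => Or.inl rfl) (fun _ => Or.inr rfl)

end HomComplex

section Retract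

variable {V : Type*} {G : SymGraph V} {r : V → V}

theorem isGraphHom_of_isDominatedBy (hr : ∀ u, G.IsDominatedBy u (r u)) : IsGraphHom G G r :=
  fun a b hab => hr b (r a) (G.symm _ _ (hr a b (G.symm _ _ hab)))

theorem xHomotopic_id_of_isDominatedBy (hr : ∀ u, G.IsDominatedBy u (r u)) :
    XHomotopic G G r id :=
  .of_adj (isGraphHom_of_isDominatedBy hr) (fun _ _ h => h)
    fun a b hab => G.symm _ _ (hr a b (G.symm _ _ hab))

theorem isXHomotopyEquiv_val_of_retraction {S : Set V} (hrS : ∀ u, r u ∈ S)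
    (hr_fix : ∀ u ∈ S, r u = u) (hr : ∀ u, G.IsDominatedBy u (r u)) :
    IsXHomotopyEquiv (G.induce S) G (fun x => (x : V)) := by
  let ρ : V → S := fun u => ⟨r u, hrS u⟩
  have hρ : ρ ∘ (fun x : S => (x : V)) = id := funext fun x => Subtype.ext (hr_fix x x.2)
  refine ⟨fun _ _ h => h, ρ, fun a b hab => isGraphHom_of_isDominatedBy hr a b hab, ?_,
    xHomotopic_id_of_isDominatedBy hr⟩
  rw [hρ]
  exact .refl

end Retract

/-- If v is a dismantlable vertex of a graph G, then the inclusion G \ v ↪ G is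
a ×-homotopy equivalence. -/
theorem inclusion_xHomotopyEquiv_of_isDismantlable {V : Type*} (G : SymGraph V) (v : V)
    (hv : IsDismantlable G v) :
    IsXHomotopyEquiv (G.induce {u | u ≠ v}) G (fun x => (x : V)) := by
  classical
  obtain ⟨w, hwv, hvw⟩ := hv
  refine isXHomotopyEquiv_val_of_retraction (r := Function.update id v w) (fun u => ?_)
    (fun u hu => Function.update_of_ne hu _ _) (fun u => ?_)
  · rcases eq_or_ne u v with rfl | hu
    · simpa using hwv
    · simpa [Function.update_of_ne hu]
  · rcases eq_or_ne u v with rfl | hu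
    · rwa [Function.update_self]
    · rw [Function.update_of_ne hu]
      exact fun _ h => h
end

section
/- Let H be an induced subgraph of a graph G, let f : H → Y be a graph homomorphism, and let X = Y ∪_H G be the pushout. If H is a ×-homotopy deformation retract of G, then Y (viewed as a subgraph of X via the natural map) is a ×-homotopy deformation retract of X. -/
/-- An element of `Def(G, H)`, where `H` is the induced subgraph of `G` on `S`: a
multi-homomorphism `η : G → G` with `η w = {w}` for every vertex `w` of `H`. -/
def IsDefMultiHom {V : Type*} (G : SymGraph V) (S : Set V) (η : V → Set V) : Prop :=
  IsMultiHom G G η ∧ ∀ w ∈ S, η w = {w}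

/-- One step of a zigzag in `Def(G, H)`. -/
def defMHStep {V : Type*} (G : SymGraph V) (S : Set V) (η η' : V → Set V) : Prop :=
  IsDefMultiHom G S η ∧ IsDefMultiHom G S η' ∧ ((∀ v, η v ⊆ η' v) ∨ (∀ v, η' v ⊆ η v))

/-- The induced subgraph of `G` on `S` is a ×-homotopy deformation retract of `G`: there is a
graph homomorphism `f` in the identity component of `Def(G, H)` with `f v ∈ S` for every
vertex `v` of `G`. -/
def IsXDefRetract {V : Type*} (G : SymGraph V) (S : Set V) : Prop :=
  ∃ f : V → V, IsDefMultiHom G S (fun v => {f v}) ∧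
    Relation.ReflTransGen (defMHStep G S) (fun v => {v}) (fun v => {f v}) ∧
    ∀ v, f v ∈ S

/-- The identifications defining the pushout `Y ∪_H G`, where `H` is the induced subgraph of
`G` on `S` and `f : H → Y`: each `v ∈ S` is identified with `f v`. -/
def pushRel {VG VY : Type*} (S : Set VG) (f : VG → VY) (x y : VG ⊕ VY) : Prop :=
  ∃ v ∈ S, x = Sum.inl v ∧ y = Sum.inr (f v)

/-- The pushout graph `X = Y ∪_H G`: its vertex set is the quotient of `V(G) ⊔ V(Y)`
identifying each vertex `v` of `H` with `f v`, and its edges are the images of the edges of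
`G` and of `Y`. -/
def pushoutGraph {VG VY : Type*} (G : SymGraph VG) (Y : SymGraph VY) (S : Set VG) (f : VG → VY) :
    SymGraph (Quot (pushRel S f)) where
  Adj c d :=
    (∃ v w, G.Adj v w ∧ Quot.mk (pushRel S f) (Sum.inl v) = c ∧
      Quot.mk (pushRel S f) (Sum.inl w) = d) ∨
    (∃ y z, Y.Adj y z ∧ Quot.mk (pushRel S f) (Sum.inr y) = c ∧
      Quot.mk (pushRel S f) (Sum.inr z) = d)
  symm := by
    rintro c d (⟨v, w, h, hv, hw⟩ | ⟨y, z, h, hy, hz⟩)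
    · exact Or.inl ⟨w, v, G.symm _ _ h, hw, hv⟩
    · exact Or.inr ⟨z, y, Y.symm _ _ h, hz, hy⟩

/-!
Every `φ` in `Def(G, H)` extends by the identity on `Y` to a multi-homomorphism of `X` fixing
`Y`: an edge of `X` comes from an edge of `G`, where the extension is `φ`, or from an edge of
`Y`, where it is the identity. The extension is monotone in `φ`, so it carries the zigzag in
`Def(G, H)` from the identity to the retraction `g` to a zigzag in `Def(X, Y)` from the
identity to the extension of `g`, which is a graph homomorphism with values in `Y`, since `g`
takes values in `H`.
-/

section PushoutExtension

variable {VG VY : Type*} {S : Set VG} {f : VG → VY}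

lemma pushout_mk_inl_eq_mk_inr {v : VG} (hv : v ∈ S) :
    Quot.mk (pushRel S f) (Sum.inl v) = Quot.mk (pushRel S f) (Sum.inr (f v)) :=
  Quot.sound ⟨v, hv, rfl, rfl⟩

variable (S f) in
open Classical in
/-- The extension of `φ : V(G) → Set V(G)` by the identity on `Y`. Its value at a vertex of `H`
is the singleton regardless of `φ`, which makes it well defined on the pushout; for `φ` in
`Def(G, H)` it agrees with `φ` on all of `G`. -/
noncomputable def extendById (φ : VG → Set VG) :
    Quot (pushRel S f) → Set (Quot (pushRel S f)) :=
  Quot.lift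
    (Sum.elim
      (fun v => if v ∈ S then {Quot.mk _ (Sum.inl v)} else (Quot.mk _ ∘ Sum.inl) '' φ v)
      (fun y => {Quot.mk _ (Sum.inr y)}))
    (by
      rintro _ _ ⟨v, hv, rfl, rfl⟩
      simp [hv, pushout_mk_inl_eq_mk_inr hv])

lemma extendById_mk_inl {φ : VG → Set VG} (hφ : ∀ w ∈ S, φ w = {w}) (v : VG) :
    extendById S f φ (Quot.mk _ (Sum.inl v)) = (Quot.mk _ ∘ Sum.inl) '' φ v := by
  by_cases hv : v ∈ S
  · simp [extendById, hv, hφ v hv]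
  · simp [extendById, hv]

lemma extendById_mk_inr (φ : VG → Set VG) (y : VY) :
    extendById S f φ (Quot.mk _ (Sum.inr y)) = {Quot.mk _ (Sum.inr y)} :=
  rfl

lemma extendById_mono {φ ψ : VG → Set VG} (h : ∀ v, φ v ⊆ ψ v) (c : Quot (pushRel S f)) :
    extendById S f φ c ⊆ extendById S f ψ c := by
  induction c using Quot.ind with
  | _ a =>
    rcases a with v | y
    · by_cases hv : v ∈ S
      · simp [extendById, hv]
      · simpa [extendById, hv] using Set.image_mono (h v)
    · rfl

lemma extendById_id :
    extendById S f (fun v => {v}) = fun c => {c} := by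
  funext c
  induction c using Quot.ind with
  | _ a => rcases a with v | y <;> simp [extendById]

lemma exists_extendById_singleton_eq (g : VG → VG) (c : Quot (pushRel S f)) :
    ∃ d, extendById S f (fun v => {g v}) c = {d} := by
  induction c using Quot.ind with
  | _ a =>
    rcases a with v | y
    · by_cases hv : v ∈ S <;> simp [extendById, hv]
    · exact ⟨_, rfl⟩

lemma extendById_subset_range_inr {φ : VG → Set VG} (hφ : ∀ v, φ v ⊆ S)
    (c : Quot (pushRel S f)) :
    extendById S f φ c ⊆ {d | ∃ y : VY, Quot.mk (pushRel S f) (Sum.inr y) = d} := by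
  induction c using Quot.ind with
  | _ a =>
    rcases a with v | y
    · by_cases hv : v ∈ S
      · simp only [extendById, Sum.elim_inl, hv, if_true, Set.singleton_subset_iff]
        exact ⟨f v, (pushout_mk_inl_eq_mk_inr hv).symm⟩
      · simp only [extendById, Sum.elim_inl, hv, if_false]
        rintro _ ⟨x, hx, rfl⟩
        exact ⟨f x, (pushout_mk_inl_eq_mk_inr (hφ v hx)).symm⟩
    · rintro _ rfl
      exact ⟨y, rfl⟩

lemma IsDefMultiHom.extendById {G : SymGraph VG} (Y : SymGraph VY) {φ : VG → Set VG}
    (hφ : IsDefMultiHom G S φ) :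
    IsDefMultiHom (pushoutGraph G Y S f)
      {c | ∃ y : VY, Quot.mk (pushRel S f) (Sum.inr y) = c} (extendById S f φ) := by
  obtain ⟨⟨hne, hadj⟩, hfix⟩ := hφ
  refine ⟨⟨fun c => ?_, ?_⟩, ?_⟩
  · induction c using Quot.ind with
    | _ a =>
      rcases a with v | y
      · simpa only [extendById_mk_inl hfix] using (hne v).image _
      · exact Set.singleton_nonempty _
  · rintro _ _ (⟨v, w, hvw, rfl, rfl⟩ | ⟨y, z, hyz, rfl, rfl⟩)
    · simp only [extendById_mk_inl hfix, Set.forall_mem_image, Function.comp_apply]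
      exact fun x hx x' hx' => Or.inl ⟨x, x', hadj v w hvw x hx x' hx', rfl, rfl⟩
    · simp only [extendById_mk_inr, Set.mem_singleton_iff, forall_eq]
      exact Or.inr ⟨y, z, hyz, rfl, rfl⟩
  · rintro _ ⟨y, rfl⟩
    exact extendById_mk_inr φ y

lemma Relation.ReflTransGen.extendById {G : SymGraph VG} (Y : SymGraph VY)
    {φ ψ : VG → Set VG} (h : Relation.ReflTransGen (defMHStep G S) φ ψ) :
    Relation.ReflTransGen
      (defMHStep (pushoutGraph G Y S f) {c | ∃ y : VY, Quot.mk (pushRel S f) (Sum.inr y) = c})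
      (extendById S f φ) (extendById S f ψ) :=
  h.lift _ fun _ _ ⟨hφ, hψ, hle⟩ =>
    ⟨hφ.extendById Y, hψ.extendById Y, hle.imp extendById_mono extendById_mono⟩

end PushoutExtension

theorem pushout_xDefRetract_general {VG VY : Type*} (G : SymGraph VG) (Y : SymGraph VY)
    (S : Set VG) (f : VG → VY)
    (h : IsXDefRetract G S) :
    IsXDefRetract (pushoutGraph G Y S f)
      {c | ∃ y : VY, Quot.mk (pushRel S f) (Sum.inr y) = c} := by
  obtain ⟨g, hg, hzig, hgS⟩ := h
  choose F hF using exists_extendById_singleton_eq (S := S) (f := f) g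
  have hext : extendById S f (fun v => {g v}) = fun c => {F c} := funext hF
  refine ⟨F, hext ▸ hg.extendById Y, ?_, fun c => ?_⟩
  · simpa only [extendById_id, hext] using hzig.extendById Y (f := f)
  · exact extendById_subset_range_inr (fun v => Set.singleton_subset_iff.mpr (hgS v)) c
      (hF c ▸ Set.mem_singleton (F c))

/-- Let H be an induced subgraph of a graph G (on the vertex set S), let
f : H → Y be a graph homomorphism, and let X = Y ∪_H G be the pushout.  If H is a ×-homotopy
deformation retract of G, then Y, viewed as a subgraph of X via the natural map, is a
×-homotopy deformation retract of X. -/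
theorem pushout_xDefRetract {VG VY : Type*} (G : SymGraph VG) (Y : SymGraph VY)
    (S : Set VG) (f : VG → VY)
    (hf : ∀ v ∈ S, ∀ w ∈ S, G.Adj v w → Y.Adj (f v) (f w))
    (h : IsXDefRetract G S) :
    IsXDefRetract (pushoutGraph G Y S f)
      {c | ∃ y : VY, Quot.mk (pushRel S f) (Sum.inr y) = c} :=
  pushout_xDefRetract_general G Y S f h
end
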